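/- arXiv:2004.05036 — 5 statements merged into one kernel-verified Lean document; each statement's English description precedes it below -/
import Mathlib

section
/- If (h,∇) is a quasi-statistical structure with h symmetric or skew-symmetric, then for every real α the α-connection ∇^(α) := ((1+α)/2)∇ + ((1−α)/2)∇* satisfies T^{∇^(α)} = ((1+α)/2) T^∇, ∇^(α) h = α ∇ h, and (d^{∇^(α)}h)(X,Y,Z) = ((1−α)/2) h(T^∇(X,Y),Z). -/
/-- If `(h,∇)` is a quasi-statistical structure with `h` symmetric or
skew-symmetric (`h X Y = flat X Y`), and `∇* = nStar` is the dual connection, then for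
every real `α` the α-connection `∇^(α) := ((1+α)/2)∇ + ((1−α)/2)∇*` satisfies
`T^{∇^(α)} = ((1+α)/2) T^∇`, `∇^(α) h = α ∇ h`, and
`(d^{∇^(α)} h)(X,Y,Z) = ((1−α)/2) h(T^∇(X,Y), Z)`. -/
theorem stmt_4 {A : Type} [CommRing A] [Algebra ℝ A]
    {V : Type} [AddCommGroup V] [Module A V] [Module ℝ V] [IsScalarTower ℝ A V]
    (D : V → A → A)
    (hD : ∀ X f g, D X (f * g) = f * D X g + g * D X f)
    (flat : V ≃ₗ[A] (V →ₗ[A] A))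
    (hsym : (∀ X Y, flat X Y = flat Y X) ∨ (∀ X Y, flat X Y = - flat Y X))
    (Lb : V → V → V)
    (nV : V → V → V)
    (hLeib : ∀ X (f : A) Y, nV X (f • Y) = D X f • Y + f • nV X Y)
    (hAdd : ∀ X Y Z, nV X (Y + Z) = nV X Y + nV X Z)
    (nO : V → (V →ₗ[A] A) → (V →ₗ[A] A))
    (hO : ∀ X β Z, nO X β Z = D X (β Z) - β (nV X Z))
    -- quasi-statistical: d^∇ h = 0
    (hqs : ∀ X Y Z,
      (nO X (flat Y) - flat (nV X Y)) Z - (nO Y (flat X) - flat (nV Y X)) Z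
        + flat (nV X Y - nV Y X - Lb X Y) Z = 0)
    (nStar : V → V → V)
    (hdual : ∀ X Y Z, D X (flat Y Z) = flat (nV X Y) Z + flat Y (nStar X Z)) :
    ∀ (α : ℝ),
      -- T^{∇^(α)} = ((1+α)/2) T^∇
      (∀ X Y,
        (((1+α)/2) • nV X Y + ((1-α)/2) • nStar X Y)
          - (((1+α)/2) • nV Y X + ((1-α)/2) • nStar Y X) - Lb X Y
        = ((1+α)/2) • (nV X Y - nV Y X - Lb X Y)) ∧
      -- ∇^(α) h = α ∇ h
      (∀ X Y Z,
        D X (flat Y Z)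
          - flat (((1+α)/2) • nV X Y + ((1-α)/2) • nStar X Y) Z
          - flat Y (((1+α)/2) • nV X Z + ((1-α)/2) • nStar X Z)
        = α • (D X (flat Y Z) - flat (nV X Y) Z - flat Y (nV X Z))) ∧
      -- (d^{∇^(α)} h)(X,Y,Z) = ((1−α)/2) h(T^∇(X,Y), Z)
      (∀ X Y Z,
        (D X (flat Y Z)
            - flat (((1+α)/2) • nV X Y + ((1-α)/2) • nStar X Y) Z
            - flat Y (((1+α)/2) • nV X Z + ((1-α)/2) • nStar X Z))
          - (D Y (flat X Z)
            - flat (((1+α)/2) • nV Y X + ((1-α)/2) • nStar Y X) Z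
            - flat X (((1+α)/2) • nV Y Z + ((1-α)/2) • nStar Y Z))
          + flat ((((1+α)/2) • nV X Y + ((1-α)/2) • nStar X Y)
              - (((1+α)/2) • nV Y X + ((1-α)/2) • nStar Y X) - Lb X Y) Z
        = ((1-α)/2) • flat (nV X Y - nV Y X - Lb X Y) Z) := by
-- D X 1 = 0
  have hD1 : ∀ X, D X (1 : A) = 0 := by
    intro X
    have h := hD X 1 1
    simp only [one_mul, mul_one] at h
    linear_combination -h
  -- D X (-a) = - D X a
  have hDneg : ∀ X (a : A), D X (-a) = -(D X a) := by
    intro X a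
    have hm1 : D X (-1 : A) = 0 := by
      have h := hD X (-1 : A) (-1)
      rw [neg_mul_neg, one_mul, hD1] at h
      have h2 : (2 : ℝ) • D X (-1 : A) = 0 := by
        rw [two_smul]; linear_combination h
      have := congrArg (fun t => ((1:ℝ)/2) • t) h2
      simpa [smul_smul] using this
    have h := hD X (-1 : A) a
    rw [neg_one_mul, hm1] at h
    linear_combination h
  -- pushing real scalars through flat
  have fsmul : ∀ (r : ℝ) (v : V) (Z : V), flat (r • v) Z = r • flat v Z := by
    intro r v Z
    rw [← algebraMap_smul A r v, map_smul, LinearMap.smul_apply, algebraMap_smul]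
  have gsmul : ∀ (Y : V) (r : ℝ) (v : V), flat Y (r • v) = r • flat Y v := by
    intro Y r v
    rw [← algebraMap_smul A r v, map_smul, algebraMap_smul]
  -- key flip identity
  have key : ∀ X Y Z, flat (nStar X Y) Z = D X (flat Y Z) - flat Y (nV X Z) := by
    rcases hsym with hs | hs
    · intro X Y Z
      have h := hdual X Z Y
      rw [hs Z Y, hs (nV X Z) Y, hs Z (nStar X Y)] at h
      linear_combination -h
    · intro X Y Z
      have h := hdual X Z Y
      rw [hs Z Y, hDneg, hs (nV X Z) Y, hs Z (nStar X Y)] at h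
      linear_combination h
  -- expanded quasi-statistical condition
  have hqs2 : ∀ X Y Z,
      (D X (flat Y Z) - flat Y (nV X Z) - flat (nV X Y) Z)
        - (D Y (flat X Z) - flat X (nV Y Z) - flat (nV Y X) Z)
        + (flat (nV X Y) Z - flat (nV Y X) Z - flat (Lb X Y) Z) = 0 := by
    intro X Y Z
    have h := hqs X Y Z
    simp only [LinearMap.sub_apply, hO, map_sub] at h
    linear_combination h
  have hqs' : ∀ X Y Z,
      D X (flat Y Z) - flat Y (nV X Z)
        - (D Y (flat X Z) - flat X (nV Y Z)) - flat (Lb X Y) Z = 0 := by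
    intro X Y Z
    linear_combination hqs2 X Y Z
  -- the dual connection is torsion-free
  have tstar : ∀ X Y, nStar X Y - nStar Y X - Lb X Y = 0 := by
    intro X Y
    rw [← (LinearEquiv.map_eq_zero_iff flat)]
    ext Z
    simp only [map_sub, LinearMap.sub_apply, LinearMap.zero_apply]
    rw [key X Y Z, key Y X Z]
    linear_combination hqs' X Y Z
  -- the other dual identity
  have hQ : ∀ X Y Z, flat Y (nStar X Z) = D X (flat Y Z) - flat (nV X Y) Z := by
    intro X Y Z
    linear_combination -hdual X Y Z
  intro α
  have e2 : ∀ X Y Z,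
      D X (flat Y Z)
        - flat (((1+α)/2) • nV X Y + ((1-α)/2) • nStar X Y) Z
        - flat Y (((1+α)/2) • nV X Z + ((1-α)/2) • nStar X Z)
      = α • (D X (flat Y Z) - flat (nV X Y) Z - flat Y (nV X Z)) := by
    intro X Y Z
    simp only [map_add, LinearMap.add_apply, fsmul, gsmul]
    rw [key X Y Z, hQ X Y Z]
    module
  have e1 : ∀ X Y,
      (((1+α)/2) • nV X Y + ((1-α)/2) • nStar X Y)
        - (((1+α)/2) • nV Y X + ((1-α)/2) • nStar Y X) - Lb X Y
      = ((1+α)/2) • (nV X Y - nV Y X - Lb X Y) := by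
    intro X Y
    have h2 : nStar X Y = nStar Y X + Lb X Y := by
      have h := tstar X Y
      rw [← sub_eq_zero]; rw [← h]; abel
    rw [h2]
    module
  refine ⟨e1, e2, ?_⟩
  intro X Y Z
  rw [e2 X Y Z, e2 Y X Z, e1 X Y, fsmul]
  rw [← smul_sub]
  have h0 : (D X (flat Y Z) - flat (nV X Y) Z - flat Y (nV X Z))
      - (D Y (flat X Z) - flat (nV Y X) Z - flat X (nV Y Z))
      = - flat (nV X Y - nV Y X - Lb X Y) Z := by
    simp only [map_sub, LinearMap.sub_apply]
    linear_combination hqs2 X Y Z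
  rw [h0]
  module
end

section
/- If (h,∇) is a quasi-statistical structure with h symmetric or skew-symmetric and α ≠ 1, then (h,∇^(α)) is a statistical structure if and only if ∇ is torsion-free, i.e. if and only if (h,∇) is a statistical structure. -/
/-- If `(h,∇)` is a quasi-statistical structure with `h` symmetric or
skew-symmetric and `α ≠ 1`, then `(h, ∇^(α))` is a statistical structure (torsion-free and
Codazzi) if and only if `∇` is torsion-free, i.e. if and only if `(h,∇)` is a statistical
structure (here `h X Y = flat X Y`, `∇^(α) := ((1+α)/2)∇ + ((1−α)/2)∇*`). -/
theorem stmt_5 {A : Type} [CommRing A] [Algebra ℝ A]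
    {V : Type} [AddCommGroup V] [Module A V] [Module ℝ V] [IsScalarTower ℝ A V]
    (D : V → A → A)
    (hD : ∀ X f g, D X (f * g) = f * D X g + g * D X f)
    (flat : V ≃ₗ[A] (V →ₗ[A] A))
    (hsym : (∀ X Y, flat X Y = flat Y X) ∨ (∀ X Y, flat X Y = - flat Y X))
    (Lb : V → V → V)
    (nV : V → V → V)
    (hLeib : ∀ X (f : A) Y, nV X (f • Y) = D X f • Y + f • nV X Y)
    (hAdd : ∀ X Y Z, nV X (Y + Z) = nV X Y + nV X Z)
    (nO : V → (V →ₗ[A] A) → (V →ₗ[A] A))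
    (hO : ∀ X β Z, nO X β Z = D X (β Z) - β (nV X Z))
    -- quasi-statistical: d^∇ h = 0
    (hqs : ∀ X Y Z,
      (nO X (flat Y) - flat (nV X Y)) Z - (nO Y (flat X) - flat (nV Y X)) Z
        + flat (nV X Y - nV Y X - Lb X Y) Z = 0)
    (nStar : V → V → V)
    (hdual : ∀ X Y Z, D X (flat Y Z) = flat (nV X Y) Z + flat Y (nStar X Z))
    (α : ℝ) (hα : α ≠ 1) :
    -- (h, ∇^(α)) statistical
    ((∀ X Y,
        (((1+α)/2) • nV X Y + ((1-α)/2) • nStar X Y)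
          - (((1+α)/2) • nV Y X + ((1-α)/2) • nStar Y X) - Lb X Y = 0) ∧
      (∀ X Y Z,
        D X (flat Y Z)
          - flat (((1+α)/2) • nV X Y + ((1-α)/2) • nStar X Y) Z
          - flat Y (((1+α)/2) • nV X Z + ((1-α)/2) • nStar X Z)
        = D Y (flat X Z)
          - flat (((1+α)/2) • nV Y X + ((1-α)/2) • nStar Y X) Z
          - flat X (((1+α)/2) • nV Y Z + ((1-α)/2) • nStar Y Z)))
    ↔
    -- ∇ torsion-free, i.e. (h,∇) statistical
    (∀ X Y, nV X Y - nV Y X - Lb X Y = 0) := by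
  have hlam : ((1-α)/2 : ℝ) ≠ 0 := by
    intro h; apply hα; field_simp at h; linarith
  have fsmul1 : ∀ (r : ℝ) (v w : V), flat (r • v) w = r • flat v w := by
    intro r v w
    rw [← algebraMap_smul A r v, map_smul, LinearMap.smul_apply, algebraMap_smul]
  have fsmul2 : ∀ (r : ℝ) (v w : V), flat v (r • w) = r • flat v w := by
    intro r v w
    rw [← algebraMap_smul A r w, map_smul, algebraMap_smul]
  have rinjA : ∀ (r : ℝ), r ≠ 0 → ∀ a : A, r • a = 0 → a = 0 := by
    intro r hr a h
    have h2 := congrArg (fun x : A => r⁻¹ • x) h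
    simpa [smul_smul, inv_mul_cancel₀ hr] using h2
  have finj : ∀ v : V, (∀ w, flat v w = 0) → v = 0 := by
    intro v h
    have h2 : flat v = 0 := by ext w; simpa using h w
    exact (LinearEquiv.map_eq_zero_iff flat).mp h2
  -- key identity from quasi-statistical + duality
  have key : ∀ X Y Z,
      (flat Y (nStar X Z) - flat Y (nV X Z))
        - (flat X (nStar Y Z) - flat X (nV Y Z))
        + (flat (nV X Y) Z - flat (nV Y X) Z - flat (Lb X Y) Z) = 0 := by
    intro X Y Z
    have h := hqs X Y Z
    simp only [LinearMap.sub_apply, hO, hdual, map_sub] at h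
    linear_combination h
  constructor
  · rintro ⟨h1, h2⟩ X Y
    have hA : ∀ X Y, nV X Y - nV Y X - Lb X Y
        = (-((1-α)/2)) • (nStar X Y - nV X Y - (nStar Y X - nV Y X)) := by
      intro X Y
      have h := h1 X Y
      linear_combination (norm := module) h
    have hw : ∀ X Y, nStar X Y - nV X Y - (nStar Y X - nV Y X) = 0 := by
      intro X Y
      apply finj
      intro Z
      have hk := key X Y Z
      have hb := h2 X Y Z
      simp only [hdual, map_add, LinearMap.add_apply, fsmul1, fsmul2] at hb
      have ha := congrArg (fun v => flat v Z) (hA X Y)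
      simp only [map_sub, LinearMap.sub_apply, fsmul1] at ha
      have hF : (-(((1-α)/2) * ((1-α)/2))) •
          (flat (nStar X Y) Z - flat (nV X Y) Z
            - (flat (nStar Y X) Z - flat (nV Y X) Z)) = 0 := by
        linear_combination (norm := module)
          hb - (((1+α)/2 : ℝ)) • hk + (((1+α)/2 : ℝ)) • ha
      have hF0 := rinjA _ (neg_ne_zero.mpr (mul_ne_zero hlam hlam)) _ hF
      simp only [map_sub, LinearMap.sub_apply]
      linear_combination hF0
    have h := hA X Y
    rw [hw X Y, smul_zero] at h
    exact h
  · intro htf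
    have hstar : ∀ X Y Z,
        flat Y (nStar X Z) - flat Y (nV X Z)
          = flat X (nStar Y Z) - flat X (nV Y Z) := by
      intro X Y Z
      have hk := key X Y Z
      have h0 := congrArg (fun v => flat v Z) (htf X Y)
      simp only [map_sub, LinearMap.sub_apply, map_zero, LinearMap.zero_apply] at h0
      linear_combination hk - h0
    have hSsymm : ∀ X Z, nStar X Z - nV X Z = nStar Z X - nV Z X := by
      rcases hsym with hs | hs
      · -- symmetric case
        have hD2 : ∀ X Y Z,
            flat Y (nStar X Z) - flat Y (nV X Z)
              = flat Z (nStar X Y) - flat Z (nV X Y) := by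
          intro X Y Z
          have e1 := hdual X Y Z
          have e2 := hdual X Z Y
          rw [hs Y Z] at e1
          rw [e2] at e1
          linear_combination - e1 + hs (nV X Z) Y - hs (nV X Y) Z
        intro X Z
        rw [← sub_eq_zero]
        apply finj
        intro Y
        simp only [map_sub, LinearMap.sub_apply]
        linear_combination hs (nStar X Z) Y - hs (nStar Z X) Y - hs (nV X Z) Y
          + hs (nV Z X) Y + hD2 X Y Z + hstar X Z Y + hD2 Z X Y
      · -- skew case: S = 0
        have hone : ∀ X, D X 1 = 0 := by
          intro X
          have h := hD X 1 1
          simp only [one_mul, mul_one] at h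
          linear_combination -h
        have hnegone : ∀ X, D X (-1) = 0 := by
          intro X
          have h := hD X (-1) (-1)
          simp only [neg_one_mul, neg_neg, hone] at h
          apply rinjA 2 (by norm_num)
          rw [two_smul]
          linear_combination h
        have hDneg : ∀ X a, D X (-a) = - D X a := by
          intro X a
          have h := hD X (-1) a
          simpa [hnegone] using h
        have hD2 : ∀ X Y Z,
            flat (nStar X Y) Z - flat (nV X Y) Z
              = flat Y (nStar X Z) - flat Y (nV X Z) := by
          intro X Y Z
          have e1 := hdual X Y Z
          have e2 := hdual X Z Y
          rw [hs Z Y, hDneg, e1] at e2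
          linear_combination e2 + hs (nV X Z) Y + hs Z (nStar X Y)
        have hanti : ∀ X Y Z,
            flat Y (nStar X Z) - flat Y (nV X Z)
              = -(flat Z (nStar X Y) - flat Z (nV X Y)) := by
          intro X Y Z
          linear_combination - hD2 X Z Y + hs (nStar X Z) Y - hs (nV X Z) Y
        have hzero : ∀ X Z, nStar X Z - nV X Z = 0 := by
          intro X Z
          apply finj
          intro Y
          have hC : flat Y (nStar X Z) - flat Y (nV X Z) = 0 := by
            apply rinjA 2 (by norm_num)
            rw [two_smul]
            linear_combination hanti X Y Z - hstar X Z Y - hanti Z X Y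
              + hstar Z Y X + hanti Y Z X + hstar X Y Z
          simp only [map_sub, LinearMap.sub_apply]
          linear_combination hs (nStar X Z) Y - hs (nV X Z) Y - hC
        intro X Z
        rw [hzero, hzero]
    refine ⟨fun X Y => ?_, fun X Y Z => ?_⟩
    · linear_combination (norm := module) htf X Y + (((1-α)/2 : ℝ)) • hSsymm X Y
    · have hs2 := congrArg (fun v => flat v Z) (hSsymm X Y)
      simp only [map_sub, LinearMap.sub_apply] at hs2
      rw [hdual X Y Z, hdual Y X Z]
      simp only [map_add, LinearMap.add_apply, fsmul1, fsmul2]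
      linear_combination (norm := module)
        (((1+α)/2 : ℝ)) • hstar X Y Z - (((1-α)/2 : ℝ)) • hs2
end

section
/- Let (M,h,∇) be a statistical manifold and J an h-symmetric (1,1)-tensor field. If ∇J = 0 then ∇*J = 0, and moreover ∇^(α)J = 0 for every α ∈ ℝ; in particular the Levi-Civita connection ∇^(0) of h satisfies ∇^(0)J = 0. -/
/-- Let `(M,h,∇)` be a statistical manifold (`h X Y = flat X Y` symmetric
non-degenerate, `∇` torsion-free, Codazzi) and `J` an h-symmetric (1,1)-tensor field.
If `∇J = 0` then `∇*J = 0` (where `∇*_X Y = ∇_X Y + h⁻¹((∇_X h)Y)` is the dual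
connection), and moreover `∇^(α) J = 0` for every `α ∈ ℝ`, where
`∇^(α) := ((1+α)/2)∇ + ((1−α)/2)∇*`; in particular `∇^(0) J = 0`
(`∇^(0)` being the Levi-Civita connection of `h`). -/
theorem stmt_11 {A : Type} [CommRing A] [Algebra ℝ A]
    {V : Type} [AddCommGroup V] [Module A V] [Module ℝ V] [IsScalarTower ℝ A V]
    (D : V → A → A)
    (hD : ∀ X f g, D X (f * g) = f * D X g + g * D X f)
    (flat : V ≃ₗ[A] (V →ₗ[A] A))
    (hsym : ∀ X Y, flat X Y = flat Y X)
    (Lb : V → V → V)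
    (nV : V → V → V)
    (hLeib : ∀ X (f : A) Y, nV X (f • Y) = D X f • Y + f • nV X Y)
    (hAdd : ∀ X Y Z, nV X (Y + Z) = nV X Y + nV X Z)
    (nO : V → (V →ₗ[A] A) → (V →ₗ[A] A))
    (hO : ∀ X β Z, nO X β Z = D X (β Z) - β (nV X Z))
    -- statistical: ∇ torsion-free and ∇h Codazzi
    (hTfree : ∀ X Y, nV X Y - nV Y X = Lb X Y)
    (hCod : ∀ X Y Z,
      (nO X (flat Y) - flat (nV X Y)) Z = (nO Y (flat X) - flat (nV Y X)) Z)
    (J : V →ₗ[A] V)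
    (hJ : ∀ X Y, flat (J X) Y = flat X (J Y))
    (nStar : V → V → V)
    (hStar : ∀ X Y, nStar X Y = nV X Y + flat.symm (nO X (flat Y) - flat (nV X Y)))
    -- ∇ J = 0
    (hJpar : ∀ X Y, nV X (J Y) = J (nV X Y)) :
    -- ∇* J = 0
    (∀ X Y, nStar X (J Y) = J (nStar X Y)) ∧
    -- ∇^(α) J = 0 for all α
    (∀ (α : ℝ) (X Y : V),
      ((1+α)/2) • nV X (J Y) + ((1-α)/2) • nStar X (J Y)
        = J (((1+α)/2) • nV X Y + ((1-α)/2) • nStar X Y)) ∧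
    -- in particular ∇^(0) J = 0
    (∀ X Y : V,
      ((1:ℝ)/2) • nV X (J Y) + ((1:ℝ)/2) • nStar X (J Y)
        = J (((1:ℝ)/2) • nV X Y + ((1:ℝ)/2) • nStar X Y)) := by

  have hJr : ∀ (r : ℝ) (v : V), J (r • v) = r • J v := by
    intro r v
    rw [← algebraMap_smul A r v, map_smul, algebraMap_smul]
  have key : ∀ X Y, nStar X (J Y) = J (nStar X Y) := by
    intro X Y
    rw [hStar, hStar, hJpar, map_add]
    congr 1
    apply flat.symm_apply_eq.mpr
    apply LinearMap.ext
    intro Z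
    have h1 : flat (J (flat.symm (nO X (flat Y) - flat (nV X Y)))) Z
        = flat (flat.symm (nO X (flat Y) - flat (nV X Y))) (J Z) := hJ _ _
    rw [h1, flat.apply_symm_apply]
    simp only [LinearMap.sub_apply, hO]
    rw [hJ Y (nV X Z), ← hJpar X Z, hJ Y Z, hJ (nV X Y) Z]
  refine ⟨key, ?_, ?_⟩
  · intro α X Y
    rw [map_add, hJr, hJr, hJpar, key]
  · intro X Y
    rw [map_add, hJr, hJr, hJpar, key]
end

section
/- Let (M,g) be pseudo-Riemannian with Levi-Civita connection ∇, J an invertible g-symmetric (1,1)-tensor field, and g̃(X,Y) := g(X,JY) the twin metric. Then (∇_X g̃)(Y,Z) = g((∇_X J)Z, Y) for all X,Y,Z, and consequently (M, g̃, ∇) is a statistical manifold if and only if (∇_X J)Y = (∇_Y J)X for all X,Y. -/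
/-- Let `(M,g)` be pseudo-Riemannian (`g X Y = flat X Y`) with
Levi-Civita connection `∇ = nV`, `J` an invertible g-symmetric (1,1)-tensor field, and
`g̃(X,Y) := g(X, JY)` the twin metric. Then `(∇_X g̃)(Y,Z) = g((∇_X J)Z, Y)` for all
`X,Y,Z`, and consequently `(M, g̃, ∇)` is a statistical manifold (i.e. the Codazzi
condition holds for `g̃`; `∇` is torsion-free and `g̃` symmetric non-degenerate) if and
only if `(∇_X J)Y = (∇_Y J)X` for all `X, Y`. -/
theorem stmt_15 {A : Type} [CommRing A] {V : Type} [AddCommGroup V] [Module A V]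
    (D : V → A → A)
    (hD : ∀ X f g, D X (f * g) = f * D X g + g * D X f)
    (flat : V ≃ₗ[A] (V →ₗ[A] A))
    (hsym : ∀ X Y, flat X Y = flat Y X)
    (Lb : V → V → V)
    (nV : V → V → V)
    (hLeib : ∀ X (f : A) Y, nV X (f • Y) = D X f • Y + f • nV X Y)
    (hAdd : ∀ X Y Z, nV X (Y + Z) = nV X Y + nV X Z)
    -- Levi-Civita: torsion-free and metric
    (hTfree : ∀ X Y, nV X Y - nV Y X = Lb X Y)
    (hMetric : ∀ X Y Z, D X (flat Y Z) = flat (nV X Y) Z + flat Y (nV X Z))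
    (J : V ≃ₗ[A] V)
    (hJ : ∀ X Y, flat (J X) Y = flat X (J Y)) :
    -- (∇_X g̃)(Y,Z) = g((∇_X J)Z, Y), where g̃ Y Z = flat Y (J Z)
    (∀ X Y Z,
      D X (flat Y (J Z)) - flat (nV X Y) (J Z) - flat Y (J (nV X Z))
        = flat (nV X (J Z) - J (nV X Z)) Y) ∧
    -- (M, g̃, ∇) statistical iff d^∇ J = 0
    ((∀ X Y Z,
        D X (flat Y (J Z)) - flat (nV X Y) (J Z) - flat Y (J (nV X Z))
          = D Y (flat X (J Z)) - flat (nV Y X) (J Z) - flat X (J (nV Y Z)))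
      ↔ (∀ X Y, nV X (J Y) - J (nV X Y) = nV Y (J X) - J (nV Y X))) := by
  have part1 : ∀ X Y Z,
      D X (flat Y (J Z)) - flat (nV X Y) (J Z) - flat Y (J (nV X Z))
        = flat (nV X (J Z) - J (nV X Z)) Y := by
    intro X Y Z
    rw [hMetric]
    simp only [map_sub, LinearMap.sub_apply]
    rw [hsym (nV X (J Z)) Y, hsym (J (nV X Z)) Y]
    ring
  refine ⟨part1, ?_⟩
  have slot : ∀ X Y Z, flat (nV X (J Y) - J (nV X Y)) Z
      = flat (nV X (J Z) - J (nV X Z)) Y := by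
    intro X Y Z
    simp only [map_sub, LinearMap.sub_apply]
    linear_combination -(hMetric X (J Y) Z) + (hMetric X Y (J Z))
      + congrArg (D X) (hJ Y Z) - (hJ (nV X Y) Z) - (hJ Y (nV X Z))
      - (hsym (nV X (J Z)) Y) + (hsym (J (nV X Z)) Y)
  constructor
  · intro h X Y
    apply flat.injective
    apply LinearMap.ext
    intro Z
    calc flat (nV X (J Y) - J (nV X Y)) Z
        = flat (nV X (J Z) - J (nV X Z)) Y := slot X Y Z
      _ = flat (nV Y (J Z) - J (nV Y Z)) X := by rw [← part1, ← part1, h]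
      _ = flat (nV Y (J X) - J (nV Y X)) Z := (slot Y X Z).symm
  · intro h X Y Z
    rw [part1, part1, h X Z, slot Z X Y, h Z Y]
end

section
/- Let (M,g) be pseudo-Riemannian with Levi-Civita connection ∇ and J a g-symmetric (1,1)-tensor field satisfying d^∇J = 0 and F(X,Y,Z) := g̃((∇_X J)Y, Z) where g̃(X,Y) = g(X,JY). Then F(Y,·,X) − F(X,·,Y) = 0 for all X,Y if and only if J((∇_X J)Y) = (∇_X J)(JY) for all X,Y, and equivalently if and only if J((∇_Y J)X) = (∇_{JY} J)X for all X,Y. -/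
section Aux
variable {A : Type} [CommRing A] {V : Type} [AddCommGroup V] [Module A V]

lemma aux_inj (flat : V ≃ₗ[A] (V →ₗ[A] A)) {a b : V}
    (h : ∀ Z, flat a Z = flat b Z) : a = b :=
  flat.injective (LinearMap.ext h)

lemma aux_symN (D : V → A → A) (flat : V ≃ₗ[A] (V →ₗ[A] A))
    (nV : V → V → V)
    (hMetric : ∀ X Y Z, D X (flat Y Z) = flat (nV X Y) Z + flat Y (nV X Z))
    (J : V →ₗ[A] V) (hJ : ∀ X Y, flat (J X) Y = flat X (J Y))
    (X Y Z : V) :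
    flat (nV X (J Y) - J (nV X Y)) Z = flat Y (nV X (J Z) - J (nV X Z)) := by
  have h1 := hMetric X (J Y) Z
  have h2 := hMetric X Y (J Z)
  have h3 := congrArg (D X) (hJ Y Z)
  have h4 := hJ (nV X Y) Z
  have h5 := hJ Y (nV X Z)
  simp only [map_sub, LinearMap.sub_apply]
  linear_combination -h1 + h2 + h3 - h4 - h5

end Aux

/-- Let `(M,g)` be pseudo-Riemannian (`g X Y = flat X Y`) with
Levi-Civita connection `∇ = nV` and `J` a g-symmetric (1,1)-tensor field with
`d^∇ J = 0`, and `F(X,Y,Z) := g̃((∇_X J)Y, Z)` where `g̃(X,Y) = g(X,JY)`. Then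
`F(Y,·,X) − F(X,·,Y) = 0` for all `X,Y` iff `J((∇_X J)Y) = (∇_X J)(JY)` for all `X,Y`,
and equivalently iff `J((∇_Y J)X) = (∇_{JY} J)X` for all `X,Y`. -/
theorem stmt_17 {A : Type} [CommRing A] {V : Type} [AddCommGroup V] [Module A V]
    (D : V → A → A)
    (hD : ∀ X f g, D X (f * g) = f * D X g + g * D X f)
    (flat : V ≃ₗ[A] (V →ₗ[A] A))
    (hsym : ∀ X Y, flat X Y = flat Y X)
    (Lb : V → V → V)
    (nV : V → V → V)
    (hLeib : ∀ X (f : A) Y, nV X (f • Y) = D X f • Y + f • nV X Y)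
    (hAdd : ∀ X Y Z, nV X (Y + Z) = nV X Y + nV X Z)
    -- Levi-Civita: torsion-free and metric
    (hTfree : ∀ X Y, nV X Y - nV Y X = Lb X Y)
    (hMetric : ∀ X Y Z, D X (flat Y Z) = flat (nV X Y) Z + flat Y (nV X Z))
    (J : V →ₗ[A] V)
    (hJ : ∀ X Y, flat (J X) Y = flat X (J Y))
    -- d^∇ J = 0
    (hdJ : ∀ X Y, nV X (J Y) - J (nV X Y) = nV Y (J X) - J (nV Y X)) :
    -- F(Y,·,X) − F(X,·,Y) = 0 iff J((∇_X J)Y) = (∇_X J)(JY) ...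
    ((∀ X Y Z, flat (nV Y (J Z) - J (nV Y Z)) (J X) = flat (nV X (J Z) - J (nV X Z)) (J Y))
      ↔ (∀ X Y, J (nV X (J Y) - J (nV X Y)) = nV X (J (J Y)) - J (nV X (J Y)))) ∧
    -- ... and equivalently iff J((∇_Y J)X) = (∇_{JY} J)X
    ((∀ X Y Z, flat (nV Y (J Z) - J (nV Y Z)) (J X) = flat (nV X (J Z) - J (nV X Z)) (J Y))
      ↔ (∀ X Y, J (nV Y (J X) - J (nV Y X)) = nV (J Y) (J X) - J (nV (J Y) X))) := by
  have sN := aux_symN D flat nV hMetric J hJ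
  have key : (∀ X Y Z, flat (nV Y (J Z) - J (nV Y Z)) (J X)
        = flat (nV X (J Z) - J (nV X Z)) (J Y))
      ↔ (∀ X Y, J (nV X (J Y) - J (nV X Y)) = nV X (J (J Y)) - J (nV X (J Y))) := by
    constructor
    · intro hA
      -- first derive: N Y (J X) = N X (J Y)
      have hA' : ∀ X Y, nV Y (J (J X)) - J (nV Y (J X)) = nV X (J (J Y)) - J (nV X (J Y)) := by
        intro X Y
        apply aux_inj flat
        intro Z
        calc flat (nV Y (J (J X)) - J (nV Y (J X))) Z
            = flat (J X) (nV Y (J Z) - J (nV Y Z)) := sN Y (J X) Z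
          _ = flat (nV Y (J Z) - J (nV Y Z)) (J X) := hsym _ _
          _ = flat (nV X (J Z) - J (nV X Z)) (J Y) := hA X Y Z
          _ = flat (J Y) (nV X (J Z) - J (nV X Z)) := hsym _ _
          _ = flat (nV X (J (J Y)) - J (nV X (J Y))) Z := (sN X (J Y) Z).symm
      intro X Y
      apply aux_inj flat
      intro Z
      calc flat (J (nV X (J Y) - J (nV X Y))) Z
          = flat (nV X (J Y) - J (nV X Y)) (J Z) := hJ _ _
        _ = flat Y (nV X (J (J Z)) - J (nV X (J Z))) := sN X Y (J Z)
        _ = flat Y (nV Z (J (J X)) - J (nV Z (J X))) := by rw [hA' Z X]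
        _ = flat (nV Z (J Y) - J (nV Z Y)) (J X) := (sN Z Y (J X)).symm
        _ = flat (nV Y (J Z) - J (nV Y Z)) (J X) := by rw [hdJ Z Y]
        _ = flat (nV X (J Z) - J (nV X Z)) (J Y) := hA X Y Z
        _ = flat (J Y) (nV X (J Z) - J (nV X Z)) := hsym _ _
        _ = flat (nV X (J (J Y)) - J (nV X (J Y))) Z := (sN X (J Y) Z).symm
    · intro hB X Y Z
      calc flat (nV Y (J Z) - J (nV Y Z)) (J X)
          = flat (J X) (nV Y (J Z) - J (nV Y Z)) := hsym _ _
        _ = flat X (J (nV Y (J Z) - J (nV Y Z))) := hJ _ _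
        _ = flat X (nV Y (J (J Z)) - J (nV Y (J Z))) := by rw [hB Y Z]
        _ = flat (nV Y (J X) - J (nV Y X)) (J Z) := (sN Y X (J Z)).symm
        _ = flat (nV X (J Y) - J (nV X Y)) (J Z) := by rw [hdJ Y X]
        _ = flat Y (nV X (J (J Z)) - J (nV X (J Z))) := sN X Y (J Z)
        _ = flat Y (J (nV X (J Z) - J (nV X Z))) := by rw [hB X Z]
        _ = flat (J Y) (nV X (J Z) - J (nV X Z)) := (hJ Y _).symm
        _ = flat (nV X (J Z) - J (nV X Z)) (J Y) := hsym _ _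
  have hCiff : (∀ X Y, J (nV X (J Y) - J (nV X Y)) = nV X (J (J Y)) - J (nV X (J Y)))
      ↔ (∀ X Y, J (nV Y (J X) - J (nV Y X)) = nV (J Y) (J X) - J (nV (J Y) X)) := by
    constructor
    · intro h X Y
      rw [← hdJ X Y, ← hdJ X (J Y)]
      exact h X Y
    · intro h X Y
      rw [hdJ X Y, hdJ X (J Y)]
      exact h X Y
  exact ⟨key, key.trans hCiff⟩
end
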